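/- arXiv:1805.03097 — 4 statements merged into one kernel-verified Lean document; each statement's English description precedes it below -/
import Mathlib

section
/- Let q ≥ 13 be a prime power and let f ∈ F_q[x] be a normalized polynomial of degree 3. Then f is a permutation polynomial of F_q if and only if either q ≡ 2 (mod 3) and f = x³, or q ≡ 0 (mod 3) and f = x³ + bx where b = 0 or −b is a non-square in F_q. -/
open Polynomial

noncomputable section

private lemma charDvdCard (F : Type) [Field F] [Fintype F] :
    ringChar F ∣ Fintype.card F := by
  haveI := ringChar.charP F
  obtain ⟨n, hp, h⟩ := FiniteField.card F (ringChar F)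
  rw [h]
  exact dvd_pow_self _ (by exact_mod_cast n.pos.ne')

private lemma threeNeZero (F : Type) [Field F] [Fintype F] (hch : ¬ 3 ∣ Fintype.card F) :
    (3 : F) ≠ 0 := by
  intro h
  haveI := ringChar.charP F
  have hd : ringChar F ∣ 3 := (CharP.cast_eq_zero_iff F (ringChar F) 3).mp h
  have hp : (ringChar F).Prime := CharP.char_is_prime F (ringChar F)
  have h3 : ringChar F = 3 := (Nat.prime_dvd_prime_iff_eq hp Nat.prime_three).mp hd
  exact hch (h3 ▸ charDvdCard F)

private lemma charThree (F : Type) [Field F] [Fintype F] (hch : 3 ∣ Fintype.card F) :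
    ringChar F = 3 := by
  haveI := ringChar.charP F
  have hp : (ringChar F).Prime := CharP.char_is_prime F (ringChar F)
  obtain ⟨n, hp2, h⟩ := FiniteField.card F (ringChar F)
  rw [h] at hch
  have h3p : 3 ∣ ringChar F := Nat.Prime.dvd_of_dvd_pow Nat.prime_three hch
  exact ((Nat.prime_dvd_prime_iff_eq Nat.prime_three hp).mp h3p).symm

private lemma cubeInj (F : Type) [Field F] [Fintype F]
    (h : ¬ 3 ∣ (Fintype.card F - 1)) : Function.Injective (fun x : F => x ^ 3) := by
  intro x y hxy
  simp only at hxy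
  rcases eq_or_ne y 0 with rfl | hy
  · have h0 : x ^ 3 = 0 := by simpa using hxy
    exact pow_eq_zero_iff (by norm_num) |>.mp h0
  have hx : x ≠ 0 := by
    rintro rfl
    apply hy
    have h0 : y ^ 3 = 0 := by simpa using hxy.symm
    exact pow_eq_zero_iff (by norm_num) |>.mp h0
  have ht3 : (x / y) ^ 3 = 1 := by
    rw [div_pow, hxy, div_self (pow_ne_zero 3 hy)]
  have htne : x / y ≠ 0 := div_ne_zero hx hy
  have h1 : orderOf (x / y) ∣ 3 := orderOf_dvd_of_pow_eq_one ht3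
  have h2 : orderOf (x / y) ∣ Fintype.card F - 1 :=
    orderOf_dvd_of_pow_eq_one (FiniteField.pow_card_sub_one_eq_one _ htne)
  have hcop : Nat.Coprime 3 (Fintype.card F - 1) :=
    (Nat.Prime.coprime_iff_not_dvd Nat.prime_three).mpr h
  have hdd : orderOf (x / y) ∣ 1 := hcop ▸ Nat.dvd_gcd h1 h2
  have ht1 : x / y = 1 := orderOf_eq_one_iff.mp (Nat.dvd_one.mp hdd)
  field_simp at ht1
  exact ht1

private lemma existsOmega (F : Type) [Field F] [Fintype F]
    (h : 3 ∣ (Fintype.card F - 1)) : ∃ t : F, t ≠ 1 ∧ t ^ 3 = 1 := by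
  haveI : Fact (Nat.Prime 3) := ⟨Nat.prime_three⟩
  haveI := Classical.decEq F
  have hcard : 3 ∣ Fintype.card Fˣ := by rwa [Fintype.card_units]
  obtain ⟨ζ, hζ⟩ := exists_prime_orderOf_dvd_card 3 hcard
  refine ⟨(ζ : F), ?_, ?_⟩
  · intro h1
    have hζ1 : ζ = 1 := by simpa using h1
    rw [hζ1] at hζ
    simp at hζ
  · have hz3 : ζ ^ 3 = 1 := hζ ▸ pow_orderOf_eq_one ζ
    rw [← Units.val_pow_eq_pow_val, hz3, Units.val_one]

private lemma collision1 (F : Type) [Field F] [Fintype F]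
    (hch : ¬ 3 ∣ Fintype.card F) {a : F} (ha : a ≠ 0) :
    ∃ x y : F, x ≠ y ∧ x ^ 3 + a * x = y ^ 3 + a * y := by
  have h3ne : (3 : F) ≠ 0 := threeNeZero F hch
  obtain ⟨x, y, hxy⟩ : ∃ x y : F, x ^ 2 + x * y + y ^ 2 + a = 0 := by
    by_cases h2 : ringChar F = 2
    · obtain ⟨r, hr⟩ := FiniteField.isSquare_of_char_two h2 a
      haveI : CharP F 2 := h2 ▸ ringChar.charP F
      have htwo : (2 : F) = 0 := CharP.cast_eq_zero F 2
      exact ⟨r, 0, by linear_combination hr + r * r * htwo⟩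
    · have hodd := FiniteField.odd_card_of_char_ne_two h2
      have h2ne : (2 : F) ≠ 0 := by
        intro h
        haveI := ringChar.charP F
        have hd : ringChar F ∣ 2 := (CharP.cast_eq_zero_iff F (ringChar F) 2).mp h
        have hp : (ringChar F).Prime := CharP.char_is_prime F (ringChar F)
        exact h2 ((Nat.prime_dvd_prime_iff_eq hp Nat.prime_two).mp hd)
      obtain ⟨u, v, huv⟩ := FiniteField.exists_root_sum_quadratic
        (f := (X ^ 2 : F[X])) (g := C (3 : F) * X ^ 2 + C 0 * X + C (4 * a))
        (degree_X_pow 2) (degree_quadratic h3ne) hodd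
      simp only [eval_add, eval_mul, eval_pow, eval_X, eval_C] at huv
      refine ⟨(u - v) * (2 : F)⁻¹, v, ?_⟩
      have hinv : (2 : F) * (2 : F)⁻¹ = 1 := mul_inv_cancel₀ h2ne
      linear_combination ((2:F)⁻¹)^2 * huv +
        (-(u*v*(2:F)⁻¹) - v^2*((2:F)⁻¹+1) - a*(2*(2:F)⁻¹+1)) * hinv
  by_cases hxy2 : x = y
  · subst hxy2
    have hxne : x ≠ 0 := by
      rintro rfl
      simp at hxy
      exact ha hxy
    refine ⟨x, -2 * x, ?_, ?_⟩
    · intro h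
      apply hxne
      have h3x : (3 : F) * x = 0 := by linear_combination h
      rcases mul_eq_zero.mp h3x with h | h
      · exact absurd h h3ne
      · exact h
    · linear_combination (x - (-2 * x)) * hxy
  · exact ⟨x, y, hxy2, by linear_combination (x - y) * hxy⟩

private lemma char3diff (F : Type) [Field F] (h3 : CharP F 3) (a b x y : F) :
    (x ^ 3 + a * x ^ 2 + b * x) - (y ^ 3 + a * y ^ 2 + b * y)
      = (x - y) * ((x - y) ^ 2 + a * (x + y) + b) := by
  haveI : Fact (Nat.Prime 3) := ⟨Nat.prime_three⟩
  haveI := h3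
  have h : (x - y) ^ 3 = x ^ 3 - y ^ 3 := sub_pow_char x y
  linear_combination -h

theorem stmt_5 (F : Type) [Field F] [Fintype F] (hq : 13 ≤ Fintype.card F)
    (f : F[X])
    (hnorm : (¬ 3 ∣ Fintype.card F ∧ ∃ a : F, f = X ^ 3 + C a * X) ∨
      (3 ∣ Fintype.card F ∧ ∃ a b : F, f = X ^ 3 + C a * X ^ 2 + C b * X)) :
    Function.Bijective (fun x : F => f.eval x) ↔
      (Fintype.card F % 3 = 2 ∧ f = X ^ 3) ∨
      (3 ∣ Fintype.card F ∧ ∃ b : F, f = X ^ 3 + C b * X ∧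
        (b = 0 ∨ ¬ ∃ v : F, v ^ 2 = -b)) := by
  have hqpos : 0 < Fintype.card F := Fintype.card_pos
  rcases hnorm with ⟨hch, a, rfl⟩ | ⟨hch, a, b, rfl⟩
  · -- 3 ∤ q, f = X^3 + a X
    simp only [eval_add, eval_mul, eval_pow, eval_X, eval_C]
    constructor
    · intro hbij
      have ha : a = 0 := by
        by_contra ha
        obtain ⟨x, y, hne, heq⟩ := collision1 F hch ha
        exact hne (hbij.injective heq)
      subst ha
      left
      constructor
      · have h0 : ¬ (Fintype.card F % 3 = 0) := by
          intro h
          exact hch (Nat.dvd_of_mod_eq_zero h)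
        by_contra h2
        have hdvd : 3 ∣ (Fintype.card F - 1) := by omega
        obtain ⟨t, htne, ht3⟩ := existsOmega F hdvd
        apply htne
        have heq : t ^ 3 + 0 * t = 1 ^ 3 + 0 * 1 := by simp [ht3]
        exact hbij.injective heq
      · simp
    · rintro (⟨hq2, hf⟩ | ⟨h3, _⟩)
      · have ha : a = 0 := by
          have := congrArg (fun p => coeff p 1) hf
          simpa using this
        subst ha
        have hnd : ¬ 3 ∣ (Fintype.card F - 1) := by omega
        have hbij := Finite.injective_iff_bijective.mp (cubeInj F hnd)
        simpa using hbij
      · exact absurd h3 hch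
  · -- 3 ∣ q, f = X^3 + a X^2 + b X
    simp only [eval_add, eval_mul, eval_pow, eval_X, eval_C]
    have hr3 : ringChar F = 3 := charThree F hch
    haveI hc3 : CharP F 3 := hr3 ▸ ringChar.charP F
    have h3z : (3 : F) = 0 := CharP.cast_eq_zero F 3
    constructor
    · intro hbij
      have ha : a = 0 := by
        by_contra ha
        have key : ∀ s : F, a * s = -(1 + b) →
            (2*s+2) ^ 3 + a * (2*s+2) ^ 2 + b * (2*s+2)
              = (2*s+1) ^ 3 + a * (2*s+1) ^ 2 + b * (2*s+1) := by
          intro s has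
          have hd := char3diff F hc3 a b (2*s+2) (2*s+1)
          have hfac : ((2*s+2 : F) - (2*s+1)) *
              (((2*s+2:F) - (2*s+1)) ^ 2 + a * ((2*s+2) + (2*s+1)) + b) = 0 := by
            linear_combination (a - 1 - b) * h3z + 4 * has
          linear_combination hd + hfac
        set s : F := -(1 + b) * a⁻¹ with hs
        have hai : a * a⁻¹ = 1 := mul_inv_cancel₀ ha
        have has : a * s = -(1 + b) := by
          rw [hs]
          linear_combination (-(1+b)) * hai
        have heq := key s has
        have hne : (2 * s + 2 : F) ≠ 2 * s + 1 := by
          intro h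
          have h10 : (1 : F) = 0 := by linear_combination h
          exact one_ne_zero h10
        exact hne (hbij.injective heq)
      subst ha
      right
      refine ⟨hch, b, by simp, ?_⟩
      by_cases hb : b = 0
      · exact Or.inl hb
      · right
        rintro ⟨v, hv⟩
        have hvne : v ≠ 0 := by
          rintro rfl
          exact hb (by linear_combination hv)
        apply hvne
        have heq : v ^ 3 + 0 * v ^ 2 + b * v = 0 ^ 3 + 0 * 0 ^ 2 + b * 0 := by
          linear_combination v * hv
        exact hbij.injective heq
    · rintro (⟨hq2, hf⟩ | ⟨_, b', hf, hb'⟩)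
      · exfalso
        omega
      · have ha : a = 0 := by
          have := congrArg (fun p => coeff p 2) hf
          simpa using this
        have hbb : b = b' := by
          have := congrArg (fun p => coeff p 1) hf
          simpa using this
        subst ha; subst hbb
        apply Finite.injective_iff_bijective.mp
        intro x y hxy
        simp only at hxy
        have hd := char3diff F hc3 0 b x y
        have hz : (x - y) * ((x - y) ^ 2 + 0 * (x + y) + b) = 0 := by
          rw [← hd]
          linear_combination hxy
        rcases mul_eq_zero.mp hz with h | h
        · exact sub_eq_zero.mp h
        · rcases hb' with rfl | hb'
          · have hsq : (x - y) ^ 2 = 0 := by linear_combination h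
            have := pow_eq_zero_iff (n := 2) (by norm_num) |>.mp hsq
            exact sub_eq_zero.mp this
          · exact absurd ⟨x - y, by linear_combination h⟩ hb'

end
end

section
/- Let q be an odd prime power and let a, b ∈ F_q with b ≠ 0. The rational function (x³ + ax)/(bx² + 1) ∈ F_q(x) is a permutation rational function of P¹(F_q) if and only if −b is not a square in F_q and ab = 9. -/
/-!
Write `φ = (x³ + ax)/(bx² + 1)`. For `x ≠ y`, `φ x = φ y` says that `y` is a root of
`R_x(y) = (bx² + 1) y² + x(1 - ab) y + (x² + a)`, whose discriminant is `Q(x²)` with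
`Q(u) = -4b u² + ((ab)² - 6ab - 3) u - 4a`.

If `-b` is not a square, the denominator has no zero on `F`, and for `ab = 9` the identity
`b (x - y)² + (bxy - 3)² = b R_x(y)` shows that `R_x` has no root `y ≠ x`.

Conversely, if `φ` is injective, `Q(x²)` is never a nonzero square, and unless `ab ∈ {1, 9}` it
does not vanish for `x ≠ 0`. Hence `χ(Q(u)) ≤ -χ(u)` for every `u`, where `χ` is the quadratic
character, so `∑ χ(Q(u)) ≤ -∑ χ(u) = 0`. On the other hand `Q` has discriminant
`(ab - 1)³ (ab - 9) ≠ 0`, so `∑ χ(Q(u)) = -χ(-4b) = 1`. Coprimality of numerator and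
denominator rules out `ab = 1`.
-/

open Polynomial

noncomputable section

open scoped Classical in
/-- The self-map of `ℙ¹(F) = F ∪ {∞}` (encoded as `Option F`, with `none` = `∞`)
induced by the rational function `f/g`, where `f, g` are coprime polynomials. -/
def ratEval {F : Type} [Field F] (f g : F[X]) : Option F → Option F := fun x =>
  match x with
  | some a => if g.eval a ≠ 0 then some (f.eval a / g.eval a) else none
  | none =>
      if g.natDegree < f.natDegree then none
      else if f.natDegree < g.natDegree then some 0
      else some (f.leadingCoeff / g.leadingCoeff)

open Finset Function

theorem bijective_ratEval_iff {F : Type} [Field F] [Finite F] {f g : F[X]}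
    (hfg : g.natDegree < f.natDegree) :
    Bijective (ratEval f g) ↔ (∀ x, g.eval x ≠ 0) ∧ Injective fun x => f.eval x / g.eval x := by
  have hnone : ratEval f g none = none := by simp [ratEval, hfg]
  have hsome : ∀ x, g.eval x ≠ 0 → ratEval f g (some x) = some (f.eval x / g.eval x) :=
    fun x hx => by simp [ratEval, hx]
  rw [← Finite.injective_iff_bijective]
  constructor
  · intro hinj
    have hg : ∀ x, g.eval x ≠ 0 := fun x hx =>
      Option.some_ne_none x (hinj (by rw [hnone]; simp [ratEval, hx]))
    refine ⟨hg, fun x y hxy => ?_⟩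
    simpa using @hinj (some x) (some y) (by simp only [hsome x (hg x), hsome y (hg y), hxy])
  · rintro ⟨hg, hinj⟩ (_ | x) (_ | y) h <;> simp_all [hinj.eq_iff]

section QuadraticCharSums

variable {F : Type*} [Field F] [Fintype F] [DecidableEq F]

theorem quadraticChar_le_one (x : F) : quadraticChar F x ≤ 1 := by
  rcases quadraticChar_isQuadratic F x with h | h | h <;> simp [h]

theorem sum_quadraticChar_mul_sub (hF : ringChar F ≠ 2) {d : F} (hd : d ≠ 0) :
    ∑ w : F, quadraticChar F w * quadraticChar F (w - d) = -1 := by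
  have hJ : ∑ t : F, quadraticChar F t * quadraticChar F (1 - t) = -quadraticChar F (-1) := by
    have := jacobiSum_nontrivial_inv (quadraticChar_ne_one hF)
    rwa [(quadraticChar_isQuadratic F).inv] at this
  calc ∑ w : F, quadraticChar F w * quadraticChar F (w - d)
      = ∑ t : F, quadraticChar F (d * t) * quadraticChar F (d * t - d) :=
        (Equiv.sum_comp (Equiv.mulLeft₀ d hd) _).symm
    _ = ∑ t : F, quadraticChar F (-1) * (quadraticChar F t * quadraticChar F (1 - t)) := by
        refine sum_congr rfl fun t _ => ?_
        rw [← map_mul, show d * t * (d * t - d) = d ^ 2 * (-1 * (t * (1 - t))) by ring,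
          map_mul, quadraticChar_sq_one' hd, one_mul, map_mul, map_mul]
    _ = -1 := by
        rw [← mul_sum, hJ, mul_neg, ← sq, quadraticChar_sq_one (neg_ne_zero.2 one_ne_zero)]

theorem sum_comp_sq (hF : ringChar F ≠ 2) (f : F → ℤ) :
    ∑ x : F, f (x ^ 2) = ∑ w : F, (quadraticChar F w + 1) * f w := by
  rw [← sum_fiberwise_of_maps_to (g := fun x => x ^ 2) (fun x _ => mem_univ _)]
  refine sum_congr rfl fun w _ => ?_
  rw [sum_congr rfl fun x hx => congrArg f (mem_filter.1 hx).2, sum_const, nsmul_eq_mul,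
    ← quadraticChar_card_sqrts hF w, Set.toFinset_ofPred]

theorem sum_quadraticChar_sq_sub (hF : ringChar F ≠ 2) {d : F} (hd : d ≠ 0) :
    ∑ x : F, quadraticChar F (x ^ 2 - d) = -1 := by
  have hshift : ∑ w : F, quadraticChar F (w - d) = 0 :=
    (Equiv.sum_comp (Equiv.subRight d) (quadraticChar F)).trans (quadraticChar_sum_zero hF)
  rw [sum_comp_sq hF (fun w => quadraticChar F (w - d))]
  simp only [add_mul, one_mul, sum_add_distrib, sum_quadraticChar_mul_sub hF hd, hshift, add_zero]

theorem sum_quadraticChar_quadratic (hF : ringChar F ≠ 2) {α β γ : F} (hα : α ≠ 0)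
    (hd : discrim α β γ ≠ 0) :
    ∑ u : F, quadraticChar F (α * u ^ 2 + β * u + γ) = -quadraticChar F α := by
  have h2 : (2 : F) ≠ 0 := Ring.two_ne_zero hF
  have hscaled : quadraticChar F α * ∑ u : F, quadraticChar F (α * u ^ 2 + β * u + γ) = -1 := by
    calc quadraticChar F α * ∑ u : F, quadraticChar F (α * u ^ 2 + β * u + γ)
        = ∑ u : F, quadraticChar F ((2 * α * u + β) ^ 2 - discrim α β γ) := by
          rw [mul_sum]
          refine sum_congr rfl fun u _ => ?_
          rw [show (2 * α * u + β) ^ 2 - discrim α β γ = 2 ^ 2 * (α * (α * u ^ 2 + β * u + γ)) by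
            simp only [discrim]; ring, map_mul, quadraticChar_sq_one' h2, one_mul, map_mul]
      _ = ∑ v : F, quadraticChar F (v ^ 2 - discrim α β γ) :=
          Equiv.sum_comp ((Equiv.mulLeft₀ (2 * α) (mul_ne_zero h2 hα)).trans (Equiv.addRight β))
            (fun v => quadraticChar F (v ^ 2 - discrim α β γ))
      _ = -1 := sum_quadraticChar_sq_sub hF hd
  calc ∑ u : F, quadraticChar F (α * u ^ 2 + β * u + γ)
      = quadraticChar F α ^ 2 * ∑ u : F, quadraticChar F (α * u ^ 2 + β * u + γ) := by
        rw [quadraticChar_sq_one hα, one_mul]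
    _ = -quadraticChar F α := by rw [sq, mul_assoc, hscaled, mul_neg_one]

theorem quadraticChar_comp_le_neg (Q : F → F)
    (hQ : ∀ r, IsSquare (Q (r * r)) → r = 0 ∧ Q (r * r) = 0) (u : F) :
    quadraticChar F (Q u) ≤ -quadraticChar F u := by
  by_cases hu : IsSquare u
  · obtain ⟨r, rfl⟩ := hu
    by_cases hQr : IsSquare (Q (r * r))
    · obtain ⟨rfl, h0⟩ := hQ r hQr
      rw [mul_zero] at h0
      simp [h0]
    · rw [quadraticChar_neg_one_iff_not_isSquare.2 hQr, neg_le_neg_iff]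
      exact quadraticChar_le_one _
  · rw [quadraticChar_neg_one_iff_not_isSquare.2 hu, neg_neg]
    exact quadraticChar_le_one _

end QuadraticCharSums

theorem sqrt_discrim_eq_zero_of_forall_root_eq {K : Type*} [Field K] [NeZero (2 : K)]
    {A B C x s : K} (hA : A ≠ 0) (hroot : ∀ y, A * (y * y) + B * y + C = 0 → y = x)
    (hs : discrim A B C = s * s) : s = 0 ∧ 2 * A * x + B = 0 := by
  have key : ∀ s', discrim A B C = s' * s' → 2 * A * x + B = s' := by
    intro s' hs'
    have hy : 2 * A * ((s' - B) / (2 * A)) + B = s' := by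
      field_simp
      ring
    have hroot' := hroot _ ((quadratic_eq_zero_iff_discrim_eq_sq hA _).2 (by rw [hy, hs', sq]))
    rwa [hroot'] at hy
  have h1 := key s hs
  have h2 := key (-s) (by rw [hs, neg_mul_neg])
  have h2s : 2 * s = 0 := by linear_combination h2 - h1
  have hs0 := (mul_eq_zero.1 h2s).resolve_left two_ne_zero
  exact ⟨hs0, hs0 ▸ h1⟩

section PermutationCriterion

variable {F : Type*} [Field F] {a b : F}

theorem eq_zero_of_mul_sq_add_sq_eq_zero (hb : ¬IsSquare (-b)) {t s : F}
    (h : b * t ^ 2 + s ^ 2 = 0) : t = 0 := by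
  by_contra ht
  exact hb ⟨s / t, by field_simp; linear_combination -h⟩

theorem mul_sq_add_one_ne_zero (hb : ¬IsSquare (-b)) (x : F) : b * x ^ 2 + 1 ≠ 0 := by
  intro h
  have hx : x = 0 := eq_zero_of_mul_sq_add_sq_eq_zero hb (s := 1) (by rwa [one_pow])
  simp [hx] at h

theorem forall_mul_sq_add_one_ne_zero_iff (hb : b ≠ 0) :
    (∀ x : F, b * x ^ 2 + 1 ≠ 0) ↔ ¬IsSquare (-b) := by
  refine ⟨fun h ⟨v, hv⟩ => h (v / b) ?_, mul_sq_add_one_ne_zero⟩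
  field_simp
  linear_combination -hv

theorem mul_ne_one_of_isCoprime (hco : IsCoprime (X ^ 3 + C a * X : F[X]) (C b * X ^ 2 + 1)) :
    a * b ≠ 1 := by
  intro hab
  have hunit : IsUnit (X ^ 2 + C a : F[X]) :=
    hco.isUnit_of_dvd' ⟨X, by ring⟩ ⟨C b, by rw [add_mul, ← C_mul, hab, C_1, mul_comm]⟩
  simpa [natDegree_X_pow_add_C] using natDegree_eq_zero_of_isUnit hunit

theorem injective_div_iff (hA : ∀ x : F, b * x ^ 2 + 1 ≠ 0) :
    Injective (fun x : F => (x ^ 3 + a * x) / (b * x ^ 2 + 1)) ↔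
      ∀ x y : F, (b * x ^ 2 + 1) * (y * y) + x * (1 - a * b) * y + (x ^ 2 + a) = 0 → y = x := by
  have key : ∀ x y : F, (x ^ 3 + a * x) / (b * x ^ 2 + 1) = (y ^ 3 + a * y) / (b * y ^ 2 + 1) ↔
      (x - y) * ((b * x ^ 2 + 1) * (y * y) + x * (1 - a * b) * y + (x ^ 2 + a)) = 0 := by
    intro x y
    rw [div_eq_div_iff (hA x) (hA y)]
    constructor <;> intro h <;> linear_combination h
  constructor
  · intro hinj x y h
    exact (hinj ((key x y).2 (by rw [h, mul_zero]))).symm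
  · intro hroot x y hxy
    rcases mul_eq_zero.1 ((key x y).1 hxy) with h | h
    · exact sub_eq_zero.1 h
    · exact (hroot x y h).symm

theorem forall_root_eq_of_mul_eq_nine (hb : ¬IsSquare (-b)) (hab : a * b = 9) :
    ∀ x y : F, (b * x ^ 2 + 1) * (y * y) + x * (1 - a * b) * y + (x ^ 2 + a) = 0 → y = x := by
  intro x y h
  have := eq_zero_of_mul_sq_add_sq_eq_zero hb (t := x - y) (s := b * x * y - 3)
    (by linear_combination b * h + (b * x * y - 1) * hab)
  linear_combination -this

theorem eq_zero_of_isSquare_discrim [NeZero (2 : F)] (hab1 : a * b ≠ 1) (hab9 : a * b ≠ 9) {x : F}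
    (hA : b * x ^ 2 + 1 ≠ 0)
    (hroot : ∀ y, (b * x ^ 2 + 1) * (y * y) + x * (1 - a * b) * y + (x ^ 2 + a) = 0 → y = x)
    (hsq : IsSquare (discrim (b * x ^ 2 + 1) (x * (1 - a * b)) (x ^ 2 + a))) :
    x = 0 ∧ discrim (b * x ^ 2 + 1) (x * (1 - a * b)) (x ^ 2 + a) = 0 := by
  obtain ⟨s, hs⟩ := hsq
  obtain ⟨rfl, hB⟩ := sqrt_discrim_eq_zero_of_forall_root_eq hA hroot hs
  refine ⟨?_, by simpa using hs⟩
  by_contra hx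
  have hw : 2 * b * x ^ 2 + 3 - a * b = 0 :=
    (mul_eq_zero.1 (by linear_combination hB : x * (2 * b * x ^ 2 + 3 - a * b) = 0)).resolve_left hx
  have : (a * b - 1) ^ 2 * (a * b - 9) = 0 := by
    simp only [discrim, mul_zero] at hs
    linear_combination 2 * b * hs - (a * b * (a * b) - 8 * (a * b) + 3 - 4 * b * x ^ 2) * hw
  simp [sub_eq_zero, hab1, hab9] at this

theorem mul_eq_nine_of_forall_root_eq [Fintype F] (hF : ringChar F ≠ 2) (hb : ¬IsSquare (-b))
    (hab1 : a * b ≠ 1)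
    (hroot : ∀ x y : F, (b * x ^ 2 + 1) * (y * y) + x * (1 - a * b) * y + (x ^ 2 + a) = 0 → y = x) :
    a * b = 9 := by
  classical
  have : NeZero (2 : F) := ⟨Ring.two_ne_zero hF⟩
  by_contra hab9
  have hb0 : b ≠ 0 := by rintro rfl; exact hb (by simp)
  have h4 : (4 : F) ≠ 0 := by
    rw [show (4 : F) = 2 ^ 2 by norm_num]
    exact pow_ne_zero _ two_ne_zero
  set β := (a * b) ^ 2 - 6 * (a * b) - 3
  have hdisc : ∀ x : F, discrim (b * x ^ 2 + 1) (x * (1 - a * b)) (x ^ 2 + a) =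
      -4 * b * (x * x) ^ 2 + β * (x * x) + -4 * a := by
    intro x; simp only [discrim, β]; ring
  have hsum : ∑ u : F, quadraticChar F (-4 * b * u ^ 2 + β * u + -4 * a) = 1 := by
    rw [sum_quadraticChar_quadratic hF (by simp [hb0, h4]), show -4 * b = 2 ^ 2 * -b by ring,
      map_mul, quadraticChar_sq_one' two_ne_zero, quadraticChar_neg_one_iff_not_isSquare.2 hb]
    · ring
    · rw [show discrim (-4 * b) β (-4 * a) = (a * b - 1) ^ 3 * (a * b - 9) by
        simp only [discrim, β]; ring]
      exact mul_ne_zero (pow_ne_zero _ (sub_ne_zero.2 hab1)) (sub_ne_zero.2 hab9)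
  have hle := sum_le_sum fun u (_ : u ∈ univ) => quadraticChar_comp_le_neg
    (fun u => -4 * b * u ^ 2 + β * u + -4 * a) (fun r => by
      simpa only [hdisc] using eq_zero_of_isSquare_discrim hab1 hab9
        (mul_sq_add_one_ne_zero hb r) (hroot r)) u
  rw [hsum, sum_neg_distrib, quadraticChar_sum_zero hF] at hle
  exact absurd hle (by norm_num)

end PermutationCriterion

theorem stmt_7 (F : Type) [Field F] [Fintype F] (hodd : Odd (Fintype.card F))
    (a b : F) (hb : b ≠ 0)
    (hco : IsCoprime (X ^ 3 + C a * X : F[X]) (C b * X ^ 2 + 1)) :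
    Function.Bijective (ratEval (X ^ 3 + C a * X : F[X]) (C b * X ^ 2 + 1)) ↔
      (¬ ∃ v : F, v ^ 2 = -b) ∧ a * b = 9 := by
  have hF : ringChar F ≠ 2 := fun h => by
    have := FiniteField.even_card_of_char_two h
    rw [Nat.odd_iff] at hodd
    omega
  have hdeg : (C b * X ^ 2 + 1 : F[X]).natDegree < (X ^ 3 + C a * X).natDegree := by
    rw [show (X ^ 3 + C a * X : F[X]).natDegree = 3 by compute_degree!]
    exact (show (C b * X ^ 2 + 1 : F[X]).natDegree ≤ 2 by compute_degree).trans_lt (by norm_num)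
  have hsq : (∃ v : F, v ^ 2 = -b) ↔ IsSquare (-b) := by simp [isSquare_iff_exists_sq, eq_comm]
  simp only [bijective_ratEval_iff hdeg, eval_add, eval_mul, eval_pow, eval_C, eval_X, eval_one,
    forall_mul_sq_add_one_ne_zero_iff hb, hsq]
  refine and_congr_right fun hns => (injective_div_iff (mul_sq_add_one_ne_zero hns)).trans
    ⟨mul_eq_nine_of_forall_root_eq hF hns (mul_ne_one_of_isCoprime hco),
      forall_root_eq_of_mul_eq_nine hns⟩

end
end

section
/- Let q = 2ⁿ for some positive integer n and let a₁, a₂, b₀ ∈ F_q. The rational function (x³ + a₂x² + a₁x)/(x² + x + b₀) ∈ F_q(x) is a permutation rational function of P¹(F_q) if and only if Tr_{F_q/F_2}(b₀) = 1, a₁ = b₀ + b₀⁻¹, and a₂ = 1 + b₀⁻¹. -/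
open Polynomial

noncomputable section

/-- `trOne n x` says the absolute trace `x + x² + x⁴ + ⋯ + x^{2^{n-1}}` of `x ∈ F_{2^n}` is `1`. -/
def trOne {F : Type} [Field F] (n : ℕ) (x : F) : Prop :=
  ∑ i ∈ Finset.range n, x ^ 2 ^ i = 1

/-!
Everything happens in characteristic 2; write `g = x² + x + b₀` and `T` for the absolute trace.
The map `x ↦ x² + x` is 2-to-1 onto the kernel of `T`, so unless `T b₀ = 1` the denominator `g`
has a root in `F_q`, which `φ` sends to `∞` just like `∞` itself. If `T b₀ = 1`, then `g` never
vanishes and `φ = x + (a₂ + 1) + (αx + β)/g` with `α = a₁ + b₀ + a₂ + 1`, `β = (a₂ + 1) b₀`.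
A permutation of `F_q` preserves `∑ x` and `∑ x³`; pairing `x` with `x + 1` and the identity
`∑_y T(y)/y = 1` evaluate the sums `∑ xⁱ/gʲ` occurring there, which gives `α = 0` and `β² = β`,
and `β = 0` would make `g` divide the numerator. Conversely, for the stated coefficients
`φ = x + b₀⁻¹ + 1/g`, and `φ x = φ y` with `x ≠ y` would exhibit `g x` as some `w² + w`,
of trace `0` instead of `T b₀ = 1`.
-/

namespace PermutationRational

open Finset Function
open scoped Classical

section Trace

variable {F : Type*} [Field F] {n : ℕ}

-- `trOne n x` is definitionally `absTrace n x = 1`.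
def absTrace (n : ℕ) (x : F) : F := ∑ i ∈ range n, x ^ 2 ^ i

theorem ne_zero_of_absTrace_eq_one {b : F} (hb : absTrace n b = 1) : b ≠ 0 := by
  rintro rfl
  simp [absTrace] at hb

theorem card_absTrace_eq_zero_le [Fintype F] (hn : 0 < n) :
    #{x : F | absTrace n x = 0} ≤ 2 ^ (n - 1) := by
  set E : F[X] := ∑ i ∈ range n, X ^ 2 ^ i
  have hE : ∀ x, E.eval x = absTrace n x := by simp [E, absTrace, eval_finsetSum]
  have hE0 : E ≠ 0 := by
    intro h
    have := congrArg (coeff · 1) h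
    simp [E, coeff_X_pow, eq_comm (a := 1), hn] at this
  calc #{x : F | absTrace n x = 0} ≤ E.natDegree :=
        card_le_degree_of_subset_roots fun x hx => by simpa [mem_roots hE0, hE] using hx
    _ ≤ 2 ^ (n - 1) := natDegree_sum_le_of_forall_le _ _ fun i hi => by
        rw [natDegree_X_pow]
        exact Nat.pow_le_pow_right two_pos (by rw [mem_range] at hi; omega)

theorem absTrace_sq [Fintype F] (hq : Fintype.card F = 2 ^ n) (x : F) :
    absTrace n (x ^ 2) = absTrace n x := by
  have hx : x ^ 2 ^ n = x := hq ▸ FiniteField.pow_card x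
  have h := sum_range_succ' (fun i => x ^ 2 ^ i) n
  rw [sum_range_succ, pow_zero, pow_one, hx, add_left_inj] at h
  simpa only [absTrace, ← pow_mul, ← pow_succ'] using h.symm

variable [CharP F 2]

theorem absTrace_add (x y : F) : absTrace n (x + y) = absTrace n x + absTrace n y := by
  simp only [absTrace, add_pow_char_pow, sum_add_distrib]

theorem sq_add_self_eq_iff {x y : F} : x ^ 2 + x = y ^ 2 + y ↔ x = y ∨ x = y + 1 := by
  have h2 : (2 : F) = 0 := CharTwo.two_eq_zero
  have key : x ^ 2 + x - (y ^ 2 + y) = (x - y) * (x - (y + 1)) := by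
    linear_combination (x + x * y - y ^ 2 - y) * h2
  rw [← sub_eq_zero, key, mul_eq_zero, sub_eq_zero, sub_eq_zero]

variable [Fintype F] (hq : Fintype.card F = 2 ^ n)
include hq

theorem absTrace_sq_add_self (x : F) : absTrace n (x ^ 2 + x) = 0 := by
  rw [absTrace_add, absTrace_sq hq, CharTwo.add_self_eq_zero]

theorem absTrace_eq_zero_or_one (x : F) : absTrace n x = 0 ∨ absTrace n x = 1 := by
  have h : absTrace n x ^ 2 = absTrace n x := by
    conv_rhs => rw [← absTrace_sq hq x]
    simp only [absTrace, CharTwo.sum_sq, ← pow_mul, mul_comm]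
  exact IsIdempotentElem.iff_eq_zero_or_one.1 ((sq _).symm.trans h)

-- `x ↦ x² + x` is 2-to-1 into the kernel of the trace, which has at most `q / 2` elements.
theorem exists_sq_add_self_eq (hn : 0 < n) {b : F} (hb : absTrace n b = 0) :
    ∃ x, x ^ 2 + x = b := by
  set H := univ.image fun x : F => x ^ 2 + x
  set K : Finset F := {x | absTrace n x = 0}
  have hsub : H ⊆ K := by
    intro y hy
    obtain ⟨x, -, rfl⟩ := mem_image.1 hy
    simp [K, absTrace_sq_add_self hq]
  have hfiber : ∀ y ∈ H, #{x ∈ univ | x ^ 2 + x = y} ≤ 2 := by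
    intro y hy
    obtain ⟨x₀, -, rfl⟩ := mem_image.1 hy
    calc #{x ∈ univ | x ^ 2 + x = x₀ ^ 2 + x₀} ≤ #{x₀, x₀ + 1} :=
          card_le_card fun x hx => by simpa [sq_add_self_eq_iff] using hx
      _ ≤ 2 := card_le_two
  have hH : 2 ^ n ≤ 2 * #H := hq ▸ card_le_mul_card_image univ 2 hfiber
  have hHK : H = K := eq_of_subset_of_card_le hsub <| by
    have : #K ≤ 2 ^ (n - 1) := card_absTrace_eq_zero_le hn
    rw [← Nat.two_pow_pred_mul_two hn] at hH
    omega
  have hbK : b ∈ K := by simpa [K] using hb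
  have hbH : b ∈ H := hHK ▸ hbK
  simpa [H] using hbH

end Trace

section Sums

variable {F : Type*} [Field F] [Fintype F] [CharP F 2]

-- `x` and `x + 1` contribute the same summand, and `x + (x + 1) = 1`.
theorem sum_comp_sq_add_self_eq_zero (k : F → F) : ∑ x, k (x ^ 2 + x) = 0 := by
  have h2 : (2 : F) = 0 := CharTwo.two_eq_zero
  have hk : ∀ x : F, k ((x + 1) ^ 2 + (x + 1)) = k (x ^ 2 + x) := fun x => by
    congr 1
    linear_combination (x + 1) * h2
  have hshift : ∑ x : F, (x + 1) * k (x ^ 2 + x) = ∑ x : F, x * k (x ^ 2 + x) :=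
    calc ∑ x : F, (x + 1) * k (x ^ 2 + x) = ∑ x : F, (x + 1) * k ((x + 1) ^ 2 + (x + 1)) :=
          sum_congr rfl fun x _ => by rw [hk]
      _ = ∑ x : F, x * k (x ^ 2 + x) := Fintype.sum_equiv (Equiv.addRight 1) _ _ fun _ => rfl
  calc ∑ x, k (x ^ 2 + x) = ∑ x, ((x + 1) * k (x ^ 2 + x) + x * k (x ^ 2 + x)) :=
        sum_congr rfl fun x _ => by linear_combination (-x * k (x ^ 2 + x)) * h2
    _ = 0 := by rw [sum_add_distrib, hshift, CharTwo.add_self_eq_zero]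

theorem sum_inv_sq_add_self_add_eq_zero (b : F) : ∑ x : F, (x ^ 2 + x + b)⁻¹ = 0 :=
  sum_comp_sq_add_self_eq_zero fun t => (t + b)⁻¹

variable {n : ℕ} (hq : Fintype.card F = 2 ^ n)
include hq

-- Only `i = 0` contributes: for `0 < i < n` the exponent `2 ^ i - 1` is below `q - 1`.
theorem sum_absTrace_mul_inv (hn : 0 < n) : ∑ y : F, absTrace n y * y⁻¹ = 1 := by
  obtain ⟨m, rfl⟩ : ∃ m, n = m + 1 := ⟨n - 1, by omega⟩
  have hone : ∑ y : F, y ^ 2 ^ 0 * y⁻¹ = 1 := by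
    rw [← sum_erase univ (a := 0) (by simp), sum_congr rfl fun y hy => by
      rw [pow_zero, pow_one, mul_inv_cancel₀ (ne_of_mem_erase hy)]]
    simp [card_erase_of_mem, Nat.cast_sub Fintype.card_pos, CharTwo.neg_eq]
  have hhigher : ∀ i ∈ range m, ∑ y : F, y ^ 2 ^ (i + 1) * y⁻¹ = 0 := by
    intro i hi
    have hexp : 2 ^ (i + 1) - 1 ≠ 0 := by
      have := Nat.one_lt_two_pow (n := i + 1) (by omega)
      omega
    have hpow : ∀ y : F, y ^ 2 ^ (i + 1) * y⁻¹ = y ^ (2 ^ (i + 1) - 1) := by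
      intro y
      rcases eq_or_ne y 0 with rfl | hy
      · simp [zero_pow hexp]
      · rw [pow_sub₀ _ hy Nat.one_le_two_pow, pow_one]
    simp_rw [hpow]
    refine FiniteField.sum_pow_lt_card_sub_one F _ ?_
    rw [hq]
    have := Nat.pow_lt_pow_right one_lt_two (show i + 1 < m + 1 by simpa using hi)
    have := Nat.one_le_two_pow (n := i + 1)
    omega
  simp only [absTrace, sum_mul]
  rw [sum_comm, sum_range_succ', sum_eq_zero hhigher, hone, zero_add]

variable {b : F} (hb : absTrace n b = 1)
include hb

theorem sq_add_self_add_ne_zero (x : F) : x ^ 2 + x + b ≠ 0 := by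
  intro h
  have hbx : b = x ^ 2 + x := by
    linear_combination h - (x ^ 2 + x) * CharTwo.two_eq_zero (R := F)
  rw [hbx, absTrace_sq_add_self hq] at hb
  exact zero_ne_one hb

theorem sum_filter_sq_add_self_add_eq (hn : 0 < n) (y : F) :
    ∑ x with x ^ 2 + x + b = y, x = absTrace n y := by
  rcases absTrace_eq_zero_or_one hq y with hy | hy
  · refine (sum_eq_zero fun x hx => ?_).trans hy.symm
    have hy1 : absTrace n y = 1 := by
      rw [← (mem_filter.1 hx).2, absTrace_add, absTrace_sq_add_self hq, hb, zero_add]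
    exact absurd (hy.symm.trans hy1) zero_ne_one
  · obtain ⟨x₀, hx₀⟩ := exists_sq_add_self_eq hq hn (b := y + b) <| by
      rw [absTrace_add, hy, hb, CharTwo.add_self_eq_zero]
    have hfiber : ({x | x ^ 2 + x + b = y} : Finset F) = {x₀, x₀ + 1} := by
      ext x
      simp only [mem_filter, mem_univ, true_and, mem_insert, mem_singleton]
      rw [CharTwo.add_eq_iff_eq_add, ← hx₀, sq_add_self_eq_iff]
    rw [hfiber, sum_pair (by simp), hy]
    linear_combination x₀ * CharTwo.two_eq_zero (R := F)

theorem sum_mul_inv_sq_add_self_add (hn : 0 < n) : ∑ x : F, x * (x ^ 2 + x + b)⁻¹ = 1 := by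
  rw [← sum_absTrace_mul_inv hq hn, ← sum_fiberwise univ (fun x => x ^ 2 + x + b)]
  refine sum_congr rfl fun y _ => ?_
  rw [← sum_filter_sq_add_self_add_eq hq hb hn y, sum_mul]
  exact sum_congr rfl fun x hx => by rw [(mem_filter.1 hx).2]

theorem sum_sq_mul_inv_sq_add_self_add (hn : 0 < n) :
    ∑ x : F, x ^ 2 * (x ^ 2 + x + b)⁻¹ = 1 := by
  have h : ∀ x : F, x ^ 2 * (x ^ 2 + x + b)⁻¹ =
      1 + (x * (x ^ 2 + x + b)⁻¹ + b * (x ^ 2 + x + b)⁻¹) := fun x => by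
    linear_combination mul_inv_cancel₀ (sq_add_self_add_ne_zero hq hb x) -
      (x + b) * (x ^ 2 + x + b)⁻¹ * CharTwo.two_eq_zero (R := F)
  simp only [h, sum_add_distrib, ← mul_sum, sum_mul_inv_sq_add_self_add hq hb hn,
    sum_inv_sq_add_self_add_eq_zero, sum_const, card_univ]
  simp

theorem sum_mul_inv_sq_add_self_add_sq (hn : 0 < n) :
    ∑ x : F, x * (x ^ 2 + x + b)⁻¹ ^ 2 = 1 := by
  have h : ∀ x : F, x * (x ^ 2 + x + b)⁻¹ ^ 2 =
      (x * (x ^ 2 + x + b)⁻¹) ^ 2 + ((x ^ 2 + x + b)⁻¹ + b * (x ^ 2 + x + b)⁻¹ ^ 2) := fun x => by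
    linear_combination -(x ^ 2 + x + b)⁻¹ * mul_inv_cancel₀ (sq_add_self_add_ne_zero hq hb x) +
      (x * (x ^ 2 + x + b)⁻¹ ^ 2 - (x ^ 2 + x + b)⁻¹) * CharTwo.two_eq_zero (R := F)
  simp only [h, sum_add_distrib, ← mul_sum, ← CharTwo.sum_sq,
    sum_mul_inv_sq_add_self_add hq hb hn, sum_inv_sq_add_self_add_eq_zero]
  simp

theorem eq_zero_of_bijective_add_mul_inv (hn : 0 < n) {α β : F}
    (h : Bijective fun x => x + (α * x + β) * (x ^ 2 + x + b)⁻¹) : α = 0 := by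
  have hsum := Fintype.sum_bijective _ h _ (fun x => x) fun _ => rfl
  simp only [add_mul, mul_assoc, sum_add_distrib, ← mul_sum,
    sum_mul_inv_sq_add_self_add hq hb hn, sum_inv_sq_add_self_add_eq_zero] at hsum
  simpa using hsum

theorem sq_eq_self_of_bijective_add_mul_inv (hn : 0 < n) {β : F}
    (h : Bijective fun x => x + β * (x ^ 2 + x + b)⁻¹) : β ^ 2 = β := by
  have hsum := Fintype.sum_bijective _ h (fun x => (x + β * (x ^ 2 + x + b)⁻¹) ^ 3)
    (fun x => x ^ 3) fun _ => rfl
  have hcube : ∀ x : F, (x + β * (x ^ 2 + x + b)⁻¹) ^ 3 = x ^ 3 +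
      (β * (x ^ 2 * (x ^ 2 + x + b)⁻¹) + (β ^ 2 * (x * (x ^ 2 + x + b)⁻¹ ^ 2) +
        β ^ 3 * (x ^ 2 + x + b)⁻¹ ^ 3)) := fun x => by
    linear_combination (x ^ 2 * β * (x ^ 2 + x + b)⁻¹ + x * β ^ 2 * (x ^ 2 + x + b)⁻¹ ^ 2) *
      CharTwo.two_eq_zero (R := F)
  simp only [hcube, sum_add_distrib, ← mul_sum, sum_sq_mul_inv_sq_add_self_add hq hb hn,
    sum_mul_inv_sq_add_self_add_sq hq hb hn,
    sum_comp_sq_add_self_eq_zero fun t => (t + b)⁻¹ ^ 3] at hsum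
  linear_combination hsum - β * CharTwo.two_eq_zero (R := F)

end Sums

section Coefficients

variable {F : Type*} [Field F] [Fintype F] [CharP F 2] {n : ℕ} (hq : Fintype.card F = 2 ^ n)
  {b : F} (hb : absTrace n b = 1)
include hq hb

theorem coeffs_of_bijective (hn : 0 < n) {a₁ a₂ : F}
    (h : Bijective fun x => (x ^ 3 + a₂ * x ^ 2 + a₁ * x) / (x ^ 2 + x + b)) :
    (a₁ = b ∧ a₂ = 1) ∨ (a₁ = b + b⁻¹ ∧ a₂ = 1 + b⁻¹) := by
  have h2 : (2 : F) = 0 := CharTwo.two_eq_zero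
  set α := a₁ + b + a₂ + 1
  set β := (a₂ + 1) * b
  have hdecomp : ∀ x : F, (x ^ 3 + a₂ * x ^ 2 + a₁ * x) / (x ^ 2 + x + b) + (a₂ + 1) =
      x + (α * x + β) * (x ^ 2 + x + b)⁻¹ := fun x => by
    have hg := mul_inv_cancel₀ (sq_add_self_add_ne_zero hq hb x)
    rw [div_eq_mul_inv]
    linear_combination (x + a₂ + 1) * hg +
      (a₂ + 1 - (x ^ 2 + (b + a₂ + 1) * x + (a₂ + 1) * b) * (x ^ 2 + x + b)⁻¹) * h2
  have hψ : Bijective fun x => x + (α * x + β) * (x ^ 2 + x + b)⁻¹ := by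
    simpa only [comp_def, Equiv.coe_addRight, hdecomp] using
      (Equiv.addRight (a₂ + 1)).bijective.comp h
  have hα : α = 0 := eq_zero_of_bijective_add_mul_inv hq hb hn hψ
  simp only [hα, zero_mul, zero_add] at hψ
  have ha₁ : a₁ = b + a₂ + 1 := by linear_combination hα - (b + a₂ + 1) * h2
  rcases IsIdempotentElem.iff_eq_zero_or_one.1
      ((sq β).symm.trans (sq_eq_self_of_bijective_add_mul_inv hq hb hn hψ)) with hβ | hβ
  · have ha₂ : a₂ = 1 := by
      have := (mul_eq_zero.1 hβ).resolve_right (ne_zero_of_absTrace_eq_one hb)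
      linear_combination this - h2
    exact Or.inl ⟨by rw [ha₁, ha₂]; linear_combination h2, ha₂⟩
  · have ha₂ : a₂ = 1 + b⁻¹ := by
      have := eq_inv_of_mul_eq_one_left hβ
      linear_combination this - h2
    exact Or.inr ⟨by rw [ha₁, ha₂]; linear_combination h2, ha₂⟩

theorem injective_add_inv_sq_add_self_add : Injective fun x : F => x + (x ^ 2 + x + b)⁻¹ := by
  have h2 : (2 : F) = 0 := CharTwo.two_eq_zero
  intro x y hxy
  simp only at hxy
  by_contra hne
  have hs : x + y ≠ 0 := fun h => hne (CharTwo.add_eq_zero.1 h)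
  have hu := sq_add_self_add_ne_zero hq hb x
  have hv := sq_add_self_add_ne_zero hq hb y
  have hsum : (x ^ 2 + x + b) + (y ^ 2 + y + b) = (x + y) ^ 2 + (x + y) := by
    linear_combination (b - x * y) * h2
  have htr : absTrace n (x ^ 2 + x + b) = 1 := by
    rw [absTrace_add, absTrace_sq_add_self hq, hb, zero_add]
  generalize x ^ 2 + x + b = u at hu hxy hsum htr
  generalize y ^ 2 + y + b = v at hv hxy hsum
  have huv : u * v = x + y + 1 := mul_left_cancel₀ hs <| by
    linear_combination u * v * hxy - v * mul_inv_cancel₀ hu + u * mul_inv_cancel₀ hv + hsum +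
      (y * u * v - v) * h2
  generalize x + y = s at hs hsum huv
  have hquad : u ^ 2 + (s ^ 2 + s) * u + (s + 1) = 0 := by
    linear_combination -u * hsum - huv + (u ^ 2 + u * v) * h2
  have hw : ((u + s + 1) / s) ^ 2 + (u + s + 1) / s = u := by
    field_simp
    linear_combination hquad + (u + u * s - u * s ^ 2 + s + s ^ 2) * h2
  rw [← hw, absTrace_sq_add_self hq] at htr
  exact zero_ne_one htr

theorem bijective_of_coeffs :
    Bijective fun x => (x ^ 3 + (1 + b⁻¹) * x ^ 2 + (b + b⁻¹) * x) / (x ^ 2 + x + b) := by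
  have hφ : (fun x => (x ^ 3 + (1 + b⁻¹) * x ^ 2 + (b + b⁻¹) * x) / (x ^ 2 + x + b)) =
      fun x => x + (x ^ 2 + x + b)⁻¹ + b⁻¹ := by
    funext x
    rw [div_eq_mul_inv]
    linear_combination (x + b⁻¹) * mul_inv_cancel₀ (sq_add_self_add_ne_zero hq hb x) -
      (x ^ 2 + x + b)⁻¹ * mul_inv_cancel₀ (ne_zero_of_absTrace_eq_one hb) -
      (x ^ 2 + x + b)⁻¹ * CharTwo.two_eq_zero (R := F)
  rw [hφ, ← Finite.injective_iff_bijective]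
  exact (add_left_injective b⁻¹).comp (injective_add_inv_sq_add_self_add hq hb)

end Coefficients

section RatEval

variable {F : Type} [Field F] {f g : F[X]}

theorem ratEval_none_of_natDegree_lt (h : g.natDegree < f.natDegree) :
    ratEval f g none = none := by
  simp [ratEval, h]

theorem ratEval_some_of_isRoot {a : F} (ha : g.IsRoot a) : ratEval f g (some a) = none := by
  simp [ratEval, ha.eq_zero]

theorem ratEval_eq_map (hg : ∀ a, g.eval a ≠ 0) (h : g.natDegree < f.natDegree) :
    ratEval f g = Option.map fun a => f.eval a / g.eval a := by
  funext o
  cases o with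
  | none => exact ratEval_none_of_natDegree_lt h
  | some a => simp [ratEval, hg a]

theorem not_injective_ratEval_of_isRoot (h : g.natDegree < f.natDegree) {a : F}
    (ha : g.IsRoot a) : ¬ Injective (ratEval f g) := fun hinj =>
  Option.some_ne_none a <|
    hinj ((ratEval_some_of_isRoot ha).trans (ratEval_none_of_natDegree_lt h).symm)

end RatEval

theorem bijective_option_map_iff {α β : Type*} {f : α → β} :
    Bijective (Option.map f) ↔ Bijective f := by
  refine ⟨fun h => ⟨fun x y hxy => Option.some_injective _ (h.1 (by simp [hxy])), fun y => ?_⟩,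
    fun h => (Equiv.optionCongr (Equiv.ofBijective f h)).bijective⟩
  obtain ⟨_ | x, hx⟩ := h.2 (some y)
  · simp at hx
  · exact ⟨x, by simpa using hx⟩

theorem not_isCoprime_mul_self {R : Type*} [CommRing R] [IsDomain R] {p q : R[X]}
    (hq : q.natDegree ≠ 0) : ¬ IsCoprime (p * q) q := fun h =>
  hq (natDegree_eq_zero_of_isUnit (isCoprime_self.1 h.of_mul_left_right))

end PermutationRational

open PermutationRational

theorem stmt_13 (F : Type) [Field F] [Fintype F] (n : ℕ) (hn : 0 < n)
    (hq : Fintype.card F = 2 ^ n) (a₁ a₂ b₀ : F)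
    (hco : IsCoprime (X ^ 3 + C a₂ * X ^ 2 + C a₁ * X : F[X]) (X ^ 2 + X + C b₀)) :
    Function.Bijective
        (ratEval (X ^ 3 + C a₂ * X ^ 2 + C a₁ * X : F[X]) (X ^ 2 + X + C b₀)) ↔
      trOne n b₀ ∧ a₁ = b₀ + b₀⁻¹ ∧ a₂ = 1 + b₀⁻¹ := by
  have : CharP F 2 := charP_of_card_eq_prime_pow hq
  have hg : (X ^ 2 + X + C b₀ : F[X]).natDegree = 2 := by compute_degree!
  have hf : (X ^ 3 + C a₂ * X ^ 2 + C a₁ * X : F[X]).natDegree = 3 := by compute_degree!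
  have hdeg : (X ^ 2 + X + C b₀ : F[X]).natDegree <
      (X ^ 3 + C a₂ * X ^ 2 + C a₁ * X).natDegree := by
    rw [hg, hf]; norm_num
  have hmap (hb : trOne n b₀) : ratEval (X ^ 3 + C a₂ * X ^ 2 + C a₁ * X) (X ^ 2 + X + C b₀) =
      Option.map fun x => (x ^ 3 + a₂ * x ^ 2 + a₁ * x) / (x ^ 2 + x + b₀) := by
    rw [ratEval_eq_map (fun x => by simpa using sq_add_self_add_ne_zero hq hb x) hdeg]
    simp
  constructor
  · intro hbij
    have hb : trOne n b₀ := (absTrace_eq_zero_or_one hq b₀).resolve_left fun h0 => by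
      obtain ⟨a, ha⟩ := exists_sq_add_self_eq hq hn h0
      refine not_injective_ratEval_of_isRoot hdeg (a := a) ?_ hbij.1
      simp [← ha, CharTwo.add_self_eq_zero]
    rw [hmap hb, bijective_option_map_iff] at hbij
    rcases coeffs_of_bijective hq hb hn hbij with ⟨rfl, rfl⟩ | h
    · refine absurd ?_ (not_isCoprime_mul_self (p := X) (by rw [hg]; norm_num))
      convert hco using 1
      simp only [map_one]
      ring
    · exact ⟨hb, h⟩
  · rintro ⟨hb, rfl, rfl⟩
    rw [hmap hb, bijective_option_map_iff]
    exact bijective_of_coeffs hq hb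

end
end

section
/- Let q = 3ⁿ for some positive integer n. A polynomial f ∈ F_q[x] of degree 3 is a complete permutation polynomial of F_q if and only if f = ax³ + bx + c with a ≠ 0 and each of −b/a and −(b + 1)/a is either zero or a non-square in F_q. -/
open Polynomial

noncomputable section

theorem stmt_17 (F : Type) [Field F] [Fintype F] (n : ℕ) (hn : 0 < n)
    (hq : Fintype.card F = 3 ^ n) (f : F[X]) (hdeg : f.natDegree = 3) :
    (Function.Bijective (fun x : F => f.eval x) ∧
      Function.Bijective (fun x : F => f.eval x + x)) ↔
    ∃ a b c : F, a ≠ 0 ∧ f = C a * X ^ 3 + C b * X + C c ∧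
      (-b / a = 0 ∨ ¬ ∃ v : F, v ^ 2 = -b / a) ∧
      (-(b + 1) / a = 0 ∨ ¬ ∃ v : F, v ^ 2 = -(b + 1) / a) := by
  -- characteristic 3
  have h3 : (3 : F) = 0 := by
    have h := FiniteField.cast_card_eq_zero F
    rw [hq] at h
    push_cast at h
    exact pow_eq_zero_iff hn.ne' |>.mp h
  -- decomposition of f
  set a := f.coeff 3 with ha_def
  set e := f.coeff 2 with he_def
  set b := f.coeff 1 with hb_def
  set c := f.coeff 0 with hc_def
  have hf0 : f ≠ 0 := fun h => by simp [h] at hdeg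
  have ha : a ≠ 0 := by
    have := mt leadingCoeff_eq_zero.mp hf0
    rwa [leadingCoeff, hdeg] at this
  have hf4 : f = C a * X^3 + C e * X^2 + C b * X + C c := by
    have h4 : f.natDegree < 4 := by omega
    conv_lhs => rw [f.as_sum_range' 4 h4]
    simp only [Finset.sum_range_succ, Finset.sum_range_zero, zero_add,
      ← C_mul_X_pow_eq_monomial]
    ring
  have heval : ∀ x : F, f.eval x = a * x^3 + e * x^2 + b * x + c := by
    intro x
    conv_lhs => rw [hf4]
    simp
  constructor
  · rintro ⟨hbij1, hbij2⟩
    -- first show e = 0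
    have he : e = 0 := by
      by_contra he
      obtain ⟨s, hes⟩ : ∃ s : F, e * s = -(a + b) := ⟨-(a + b) / e, by field_simp⟩
      have hxy : f.eval (-s - 1) = f.eval (-s + 1) := by
        rw [heval, heval]
        linear_combination (-2*a*s^2 + e*s - a - b) * h3 + hes
      have := hbij1.injective hxy
      have : (1 : F) = 0 := by linear_combination h3 + this
      exact one_ne_zero this
    refine ⟨a, b, c, ha, ?_, ?_, ?_⟩
    · rw [hf4, he]; simp
    · by_contra hcon
      push_neg at hcon
      obtain ⟨hne, v, hv⟩ := hcon
      have hv0 : v ≠ 0 := by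
        rintro rfl
        exact hne (by rw [← hv]; norm_num)
      have hav : a * v ^ 2 = -b := by
        field_simp at hv ⊢
        linear_combination hv
      have : f.eval v = f.eval 0 := by
        rw [heval, heval, he]
        linear_combination v * hav
      exact hv0 (hbij1.injective this)
    · by_contra hcon
      push_neg at hcon
      obtain ⟨hne, v, hv⟩ := hcon
      have hv0 : v ≠ 0 := by
        rintro rfl
        exact hne (by rw [← hv]; norm_num)
      have hav : a * v ^ 2 = -(b + 1) := by
        field_simp at hv ⊢
        linear_combination hv
      have : f.eval v + v = f.eval 0 + 0 := by
        rw [heval, heval, he]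
        linear_combination v * hav
      exact hv0 (hbij2.injective this)
  · rintro ⟨a', b', c', ha', hf', h1, h2⟩
    -- injectivity criterion
    have inj : ∀ d c0 : F, (-d / a' = 0 ∨ ¬ ∃ v : F, v ^ 2 = -d / a') →
        Function.Injective (fun x : F => a' * x^3 + d * x + c0) := by
      intro d c0 hd x y hxy
      simp only at hxy
      have hfac : (x - y) * (a' * (x - y)^2 + d) = 0 := by
        linear_combination hxy + (a' * x * y * (y - x)) * h3
      rcases mul_eq_zero.mp hfac with h | h
      · exact sub_eq_zero.mp h
      · have hsq : (x - y)^2 = -d / a' := by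
          field_simp
          linear_combination h
        rcases hd with h0 | hns
        · rw [h0] at hsq
          have := pow_eq_zero_iff (n := 2) (by norm_num) |>.mp hsq
          exact sub_eq_zero.mp this
        · exact absurd ⟨x - y, hsq⟩ hns
    have heval' : ∀ x : F, f.eval x = a' * x^3 + b' * x + c' := by
      intro x; rw [hf']; simp
    constructor
    · have hfun : (fun x : F => f.eval x) = fun x => a' * x^3 + b' * x + c' := by
        funext x; rw [heval']
      rw [hfun]
      exact Finite.injective_iff_bijective.mp (inj b' c' h1)
    · have hfun : (fun x : F => f.eval x + x) = fun x => a' * x^3 + (b' + 1) * x + c' := by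
        funext x; rw [heval']; ring
      rw [hfun]
      exact Finite.injective_iff_bijective.mp (inj (b' + 1) c' h2)

end
end
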